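/- arXiv:0806.1694 — 2 statements merged into one kernel-verified Lean document; each statement's English description precedes it below -/
import Mathlib

section
/- The Gaussian Liouville number γ = Σ_{n=1}^∞ ((1 + g(n))/2) · 2^(-n) is irrational, where g is the completely multiplicative function with g(p) = -1 if p ≡ 3 (mod 4) and g(p) = 1 otherwise. -/
/-!
Since `g` is ±1 on positive integers, `γ` is the binary number with digits
`(1 + g (n + 1)) / 2 ∈ {0, 1}`, infinitely many of which are `0` (as `g (3 s²) = -1`).
The tails `T n` of this expansion satisfy `T (n + 1) = fract (2 T n)`; if `γ = a / D` they all lie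
in the finite set `(1 / D) ℤ ∩ [0, 1)`, so two of them coincide and the digits, hence `g`, are
eventually periodic. But an eventually periodic, completely multiplicative, nowhere vanishing
function is eventually constant (compare `g ((n + 1) t)` with `g (n t)`), and then
`g p · g n = g (p n) = g n` for large `n` forces `g p = 1` for every `p`, contradicting `g 3 = -1`.
-/

open Filter

def EventuallyPeriodic {α : Type*} (f : ℕ → α) : Prop :=
  ∃ m t, 0 < t ∧ ∀ n ≥ m, f (n + t) = f n

section CompletelyMultiplicative

lemma isUnit_of_isUnit_prime {M : Type*} [Monoid M] {g : ℕ → M} (hg1 : g 1 = 1)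
    (hmul : ∀ m n : ℕ, 1 ≤ m → 1 ≤ n → g (m * n) = g m * g n)
    (hprime : ∀ p : ℕ, p.Prime → IsUnit (g p)) (n : ℕ) (hn : 1 ≤ n) : IsUnit (g n) := by
  induction n using Nat.recOnMul with
  | zero => omega
  | one => simp [hg1]
  | prime p hp => exact hprime p hp
  | mul a b ha hb =>
    obtain ⟨ha0, hb0⟩ := mul_ne_zero_iff.1 (Nat.one_le_iff_ne_zero.1 hn)
    rw [hmul a b (by omega) (by omega)]
    exact (ha (by omega)).mul (hb (by omega))

variable {M : Type*} [MonoidWithZero M] [IsRightCancelMulZero M] {g : ℕ → M}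

lemma succ_eq_of_periodic (hmul : ∀ m n : ℕ, 1 ≤ m → 1 ≤ n → g (m * n) = g m * g n)
    (hne : ∀ n, 1 ≤ n → g n ≠ 0) {m t : ℕ} (ht : 0 < t)
    (hper : ∀ n ≥ m, g (n + t) = g n)
    {n : ℕ} (hn : max m 1 ≤ n) : g (n + 1) = g n := by
  refine mul_right_cancel₀ (hne t ht) ?_
  rw [← hmul _ _ (by omega) ht, ← hmul _ _ (by omega) ht, add_mul, one_mul,
    hper _ (le_trans (le_of_max_le_left hn) (Nat.le_mul_of_pos_right n ht))]

lemma eq_one_of_eventuallyPeriodic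
    (hmul : ∀ m n : ℕ, 1 ≤ m → 1 ≤ n → g (m * n) = g m * g n)
    (hne : ∀ n, 1 ≤ n → g n ≠ 0) (hper : EventuallyPeriodic g) {p : ℕ} (hp : 1 ≤ p) :
    g p = 1 := by
  obtain ⟨m, t, ht, hper⟩ := hper
  set N := max m 1
  have hN : 1 ≤ N := le_max_right m 1
  have hconst : ∀ n, N ≤ n → g n = g N := by
    intro n hn
    induction n, hn using Nat.le_induction with
    | base => rfl
    | succ n hn ih => rw [succ_eq_of_periodic hmul hne ht hper hn, ih]
  refine mul_right_cancel₀ (hne N hN) ?_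
  rw [one_mul, ← hmul p N hp hN, hconst _ (Nat.le_mul_of_pos_left N hp)]

end CompletelyMultiplicative

noncomputable def doublingMap (x : ℝ) : ℝ := Int.fract (2 * x)

lemma exists_doublingMap_iterate_mul_den_eq_int (q : ℚ) (n : ℕ) :
    ∃ a : ℤ, doublingMap^[n] q * q.den = a := by
  induction n with
  | zero => exact ⟨q.num, by rw [Function.iterate_zero_apply]; exact_mod_cast q.mul_den_eq_num⟩
  | succ n ih =>
    obtain ⟨a, ha⟩ := ih
    set y := doublingMap^[n] q
    refine ⟨2 * a - ⌊2 * y⌋ * q.den, ?_⟩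
    rw [Function.iterate_succ_apply', doublingMap, Int.fract]
    push_cast
    linear_combination 2 * ha

lemma finite_setOf_mem_Ico_mul_eq_int {D : ℕ} (hD : 0 < D) :
    {x : ℝ | x ∈ Set.Ico 0 1 ∧ ∃ a : ℤ, x * D = a}.Finite := by
  refine ((Finset.Ico (0 : ℤ) D).finite_toSet.image fun a : ℤ => (a : ℝ) / D).subset ?_
  rintro x ⟨⟨hx0, hx1⟩, a, ha⟩
  have hD' : (0 : ℝ) < D := by exact_mod_cast hD
  have ha0 : (0 : ℝ) ≤ a := ha ▸ mul_nonneg hx0 hD'.le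
  have haD : (a : ℝ) < D := ha ▸ mul_lt_of_lt_one_left hD' hx1
  refine ⟨a, Finset.mem_Ico.2 ⟨by exact_mod_cast ha0, by exact_mod_cast haD⟩, ?_⟩
  change (a : ℝ) / D = x
  rw [← ha, mul_div_cancel_right₀ x hD'.ne']

lemma hasSum_inv_two_pow_succ : HasSum (fun k : ℕ => (2 : ℝ)⁻¹ ^ (k + 1)) 1 := by
  simpa [pow_succ'] using hasSum_geometric_two.mul_left (2 : ℝ)⁻¹

noncomputable def binaryTail (b : ℕ → ℝ) (n : ℕ) : ℝ :=
  ∑' k, b (n + k) * (2 : ℝ)⁻¹ ^ (k + 1)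

section BinaryTail

variable {b : ℕ → ℝ}

lemma binaryTail_term_nonneg (hb : ∀ n, b n = 0 ∨ b n = 1) (n k : ℕ) :
    0 ≤ b n * (2 : ℝ)⁻¹ ^ (k + 1) := by
  rcases hb n with h | h <;> simp [h]

lemma binaryTail_term_le (hb : ∀ n, b n = 0 ∨ b n = 1) (n k : ℕ) :
    b n * (2 : ℝ)⁻¹ ^ (k + 1) ≤ (2 : ℝ)⁻¹ ^ (k + 1) := by
  rcases hb n with h | h <;> simp [h]

lemma summable_binaryTail (hb : ∀ n, b n = 0 ∨ b n = 1) (n : ℕ) :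
    Summable fun k => b (n + k) * (2 : ℝ)⁻¹ ^ (k + 1) :=
  .of_nonneg_of_le (fun k => binaryTail_term_nonneg hb _ k)
    (fun k => binaryTail_term_le hb _ k) hasSum_inv_two_pow_succ.summable

lemma binaryTail_nonneg (hb : ∀ n, b n = 0 ∨ b n = 1) (n : ℕ) : 0 ≤ binaryTail b n :=
  tsum_nonneg fun k => binaryTail_term_nonneg hb _ k

lemma binaryTail_lt_one (hb : ∀ n, b n = 0 ∨ b n = 1) (hzero : ∃ᶠ n in atTop, b n = 0)
    (n : ℕ) : binaryTail b n < 1 := by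
  obtain ⟨m, hm, hbm⟩ := frequently_atTop.1 hzero n
  calc binaryTail b n < ∑' k : ℕ, (2 : ℝ)⁻¹ ^ (k + 1) :=
        Summable.tsum_lt_tsum_of_nonneg (i := m - n) (fun k => binaryTail_term_nonneg hb _ k)
          (fun k => binaryTail_term_le hb _ k)
          (by rw [Nat.add_sub_cancel' hm, hbm, zero_mul]; positivity)
          hasSum_inv_two_pow_succ.summable
    _ = 1 := hasSum_inv_two_pow_succ.tsum_eq

lemma two_mul_binaryTail (hb : ∀ n, b n = 0 ∨ b n = 1) (n : ℕ) :
    2 * binaryTail b n = b n + binaryTail b (n + 1) := by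
  rw [binaryTail, (summable_binaryTail hb n).tsum_eq_zero_add, mul_add, binaryTail,
    ← tsum_mul_left]
  congr 1
  · rw [add_zero]
    ring
  · refine tsum_congr fun k => ?_
    rw [show n + (k + 1) = n + 1 + k by omega]
    ring

lemma binaryTail_succ (hb : ∀ n, b n = 0 ∨ b n = 1) (hzero : ∃ᶠ n in atTop, b n = 0)
    (n : ℕ) : binaryTail b (n + 1) = doublingMap (binaryTail b n) := by
  refine (Int.fract_eq_iff.2 ⟨binaryTail_nonneg hb _, binaryTail_lt_one hb hzero _, ?_⟩).symm
  rw [two_mul_binaryTail hb, add_sub_cancel_right]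
  rcases hb n with h | h
  · exact ⟨0, by simp [h]⟩
  · exact ⟨1, by simp [h]⟩

lemma binaryTail_add (hb : ∀ n, b n = 0 ∨ b n = 1) (hzero : ∃ᶠ n in atTop, b n = 0)
    (n k : ℕ) : binaryTail b (n + k) = doublingMap^[k] (binaryTail b n) := by
  induction k with
  | zero => rfl
  | succ k ih => rw [← add_assoc, binaryTail_succ hb hzero, ih, Function.iterate_succ_apply']

lemma eventuallyPeriodic_of_binaryTail_eq_ratCast (hb : ∀ n, b n = 0 ∨ b n = 1)
    (hzero : ∃ᶠ n in atTop, b n = 0) {q : ℚ} (hq : binaryTail b 0 = q) :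
    EventuallyPeriodic b := by
  have hmem :
      ∀ n, binaryTail b n ∈ {x : ℝ | x ∈ Set.Ico 0 1 ∧ ∃ a : ℤ, x * q.den = a} :=
    fun n => ⟨⟨binaryTail_nonneg hb n, binaryTail_lt_one hb hzero n⟩, by
      simpa [← hq, ← binaryTail_add hb hzero] using
        exists_doublingMap_iterate_mul_den_eq_int q n⟩
  obtain ⟨i, j, hij, hT⟩ := Set.Finite.exists_lt_map_eq_of_forall_mem hmem
    (finite_setOf_mem_Ico_mul_eq_int q.pos)
  have hTper : ∀ n ≥ i, binaryTail b (n + (j - i)) = binaryTail b n := by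
    intro n hn
    rw [show n + (j - i) = j + (n - i) by omega, binaryTail_add hb hzero, ← hT,
      ← binaryTail_add hb hzero, Nat.add_sub_cancel' hn]
  refine ⟨i, j - i, by omega, fun n hn => ?_⟩
  have h₁ := two_mul_binaryTail hb (n + (j - i))
  have h₂ := two_mul_binaryTail hb n
  rw [Nat.add_right_comm, hTper n hn, hTper (n + 1) (by omega)] at h₁
  linarith

lemma eventuallyPeriodic_of_not_irrational (hb : ∀ n, b n = 0 ∨ b n = 1)
    (hzero : ∃ᶠ n in atTop, b n = 0)
    (hrat : ¬ Irrational (∑' n, b n * (2 : ℝ)⁻¹ ^ (n + 1))) : EventuallyPeriodic b := by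
  obtain ⟨q, hq⟩ := not_not.1 hrat
  exact eventuallyPeriodic_of_binaryTail_eq_ratCast hb hzero
    (by simpa [binaryTail] using hq.symm)

end BinaryTail

/-- The Gaussian Liouville number `γ = Σ ((1+g(n))/2) 2^(-n)` is irrational,
where `g` is completely multiplicative with `g p = -1` iff `p ≡ 3 (mod 4)`. -/
theorem stmt_2 (g : ℕ → ℤ)
    (hg1 : g 1 = 1)
    (hgmul : ∀ m n : ℕ, 1 ≤ m → 1 ≤ n → g (m * n) = g m * g n)
    (hgp : ∀ p : ℕ, p.Prime → g p = if p % 4 = 3 then -1 else 1) :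
    Irrational (∑' n : ℕ, ((1 + (g (n + 1) : ℝ)) / 2) * (2 : ℝ)⁻¹ ^ (n + 1)) := by
  have hunit : ∀ n, 1 ≤ n → IsUnit (g n) :=
    isUnit_of_isUnit_prime hg1 hgmul fun p hp => by rw [hgp p hp]; split_ifs <;> simp
  have hg3 : g 3 = -1 := by simpa using hgp 3 Nat.prime_three
  have hdigit : ∀ n, (1 + (g (n + 1) : ℝ)) / 2 = 0 ∨ (1 + (g (n + 1) : ℝ)) / 2 = 1 := by
    intro n
    rcases Int.isUnit_iff.1 (hunit (n + 1) (by omega)) with h | h <;> simp [h]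
  have hzero : ∃ᶠ n in atTop, (1 + (g (n + 1) : ℝ)) / 2 = 0 := by
    refine frequently_atTop.2 fun n => ⟨3 * ((n + 1) * (n + 1)) - 1, ?_, ?_⟩
    · have := Nat.le_mul_self (n + 1)
      omega
    · have hsq : 1 ≤ (n + 1) * (n + 1) := Nat.one_le_iff_ne_zero.2 (by positivity)
      rw [Nat.sub_add_cancel (by omega), hgmul 3 _ (by norm_num) hsq,
        hgmul _ _ (by omega) (by omega), Int.isUnit_mul_self (hunit _ (by omega)), hg3]
      norm_num
  by_contra hrat
  obtain ⟨m, t, ht, hper⟩ := eventuallyPeriodic_of_not_irrational hdigit hzero hrat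
  have hgper : EventuallyPeriodic g := ⟨m + 1, t, ht, fun n hn => by
    obtain ⟨k, rfl⟩ : ∃ k, n = k + 1 := ⟨n - 1, by omega⟩
    have h := hper k (by omega)
    dsimp only at h
    rw [Nat.add_right_comm] at h
    exact_mod_cast (by linarith : (g (k + 1 + t) : ℝ) = g (k + 1))⟩
  have h3 := eq_one_of_eventuallyPeriodic hgmul (fun n hn => (hunit n hn).ne_zero) hgper
    (show 1 ≤ 3 by norm_num)
  rw [hg3] at h3
  exact absurd h3 (by norm_num)
end

section
/- For every complex z with |z| < 1, Σ_{n=1}^∞ g(n) z^n = Σ_{k=0}^∞ z^(2^k) / (1 + z^(2^(k+1))), where g is the Gaussian Liouville function. -/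
/-!
Every `n ≥ 1` is uniquely `2 ^ k * (2 * j + 1)`, and `g` kills the power of two and agrees with
`χ₄` on odd numbers (both are completely multiplicative and agree on odd primes), so
`g (2 ^ k * (2 * j + 1)) = (-1) ^ j`. Regrouping the power series by `k` turns the inner sum over
`j` into the geometric series `∑ (-1) ^ j w ^ (2 * j + 1) = w / (1 + w ^ 2)` at `w = z ^ 2 ^ k`.
-/

open ZMod

namespace Nat

theorem two_pow_mul_odd_inj {k k' j j' : ℕ} (h : 2 ^ k * (2 * j + 1) = 2 ^ k' * (2 * j' + 1)) :
    k = k' ∧ j = j' := by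
  induction k generalizing k' with
  | zero =>
    cases k' with
    | zero => simp only [pow_zero, one_mul] at h; omega
    | succ k' => rw [pow_zero, one_mul, pow_succ', mul_assoc] at h; omega
  | succ k ih =>
    cases k' with
    | zero => rw [pow_zero, one_mul, pow_succ', mul_assoc] at h; omega
    | succ k' =>
      rw [pow_succ', pow_succ', mul_assoc, mul_assoc] at h
      have := ih (Nat.eq_of_mul_eq_mul_left two_pos h)
      omega

theorem twoPowMulOdd_bijective :
    Function.Bijective fun p : ℕ × ℕ ↦ 2 ^ p.1 * (2 * p.2 + 1) - 1 := by
  refine ⟨fun ⟨k, j⟩ ⟨k', j'⟩ h ↦ ?_, fun n ↦ ?_⟩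
  · have hk : 0 < 2 ^ k * (2 * j + 1) := by positivity
    have hk' : 0 < 2 ^ k' * (2 * j' + 1) := by positivity
    have h' : 2 ^ k * (2 * j + 1) = 2 ^ k' * (2 * j' + 1) := by simp only at h; omega
    obtain ⟨rfl, rfl⟩ := two_pow_mul_odd_inj h'
    rfl
  · obtain ⟨k, _, ⟨j, rfl⟩, hn⟩ := exists_eq_two_pow_mul_odd n.succ_ne_zero
    exact ⟨(k, j), by simp only; omega⟩

/-- The shift by one makes the target `ℕ` rather than the positive integers. -/
noncomputable def twoPowMulOddEquiv : ℕ × ℕ ≃ ℕ :=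
  Equiv.ofBijective _ twoPowMulOdd_bijective

theorem twoPowMulOddEquiv_add_one (p : ℕ × ℕ) :
    twoPowMulOddEquiv p + 1 = 2 ^ p.1 * (2 * p.2 + 1) := by
  have : 0 < 2 ^ p.1 * (2 * p.2 + 1) := by positivity
  simp only [twoPowMulOddEquiv, Equiv.ofBijective_apply]
  omega

end Nat

section Multiplicative

variable {g : ℕ → ℤ}

theorem eq_χ₄_of_odd (hg1 : g 1 = 1) (hgmul : ∀ m n : ℕ, 1 ≤ m → 1 ≤ n → g (m * n) = g m * g n)
    (hgp : ∀ p : ℕ, p.Prime → Odd p → g p = χ₄ p) {n : ℕ} (hn : Odd n) : g n = χ₄ n := by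
  induction n using induction_on_primes with
  | zero => simp at hn
  | one => simp [hg1]
  | prime_mul p a hp ih =>
    obtain ⟨hpodd, haodd⟩ := Nat.odd_mul.mp hn
    rw [hgmul p a hp.one_le haodd.pos, hgp p hp hpodd, ih haodd]
    push_cast
    exact (map_mul χ₄ _ _).symm

theorem apply_two_pow_mul (hg2 : g 2 = 1)
    (hgmul : ∀ m n : ℕ, 1 ≤ m → 1 ≤ n → g (m * n) = g m * g n) (k : ℕ) {n : ℕ} (hn : 1 ≤ n) :
    g (2 ^ k * n) = g n := by
  induction k with
  | zero => simp
  | succ k ih =>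
    have hle : 1 ≤ 2 ^ k * n := Nat.one_le_two_pow.trans (Nat.le_mul_of_pos_right _ hn)
    rw [pow_succ, mul_comm _ 2, mul_assoc, hgmul 2 _ one_le_two hle, hg2, ih, one_mul]

theorem apply_two_pow_mul_odd (hg1 : g 1 = 1) (hg2 : g 2 = 1)
    (hgmul : ∀ m n : ℕ, 1 ≤ m → 1 ≤ n → g (m * n) = g m * g n)
    (hgp : ∀ p : ℕ, p.Prime → Odd p → g p = χ₄ p) (k j : ℕ) :
    g (2 ^ k * (2 * j + 1)) = (-1) ^ j := by
  rw [apply_two_pow_mul hg2 hgmul k (by omega), eq_χ₄_of_odd hg1 hgmul hgp (odd_two_mul_add_one j),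
    χ₄_eq_neg_one_pow (by omega)]
  congr 1
  omega

end Multiplicative

theorem tsum_neg_one_pow_mul_pow_two_mul_add_one {𝕜 : Type*} [NormedField 𝕜] [CompleteSpace 𝕜]
    {w : 𝕜} (hw : ‖w‖ < 1) : ∑' j : ℕ, (-1) ^ j * w ^ (2 * j + 1) = w / (1 + w ^ 2) := by
  have hw2 : ‖-w ^ 2‖ < 1 := by simpa using pow_lt_one₀ (norm_nonneg w) hw two_ne_zero
  calc ∑' j : ℕ, (-1) ^ j * w ^ (2 * j + 1) = ∑' j : ℕ, w * (-w ^ 2) ^ j := by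
        refine tsum_congr fun j ↦ ?_
        rw [neg_pow, pow_succ, pow_mul]
        ring
    _ = w / (1 + w ^ 2) := by
        rw [tsum_mul_left, tsum_geometric_of_norm_lt_one hw2, sub_neg_eq_add, div_eq_mul_inv]

theorem tsum_prod_neg_one_pow_mul_pow_two_pow_mul_odd {𝕜 : Type*} [NormedField 𝕜]
    [CompleteSpace 𝕜] {z : 𝕜} (hz : ‖z‖ < 1) :
    ∑' p : ℕ × ℕ, (-1) ^ p.2 * z ^ (2 ^ p.1 * (2 * p.2 + 1))
      = ∑' k : ℕ, z ^ (2 ^ k) / (1 + z ^ (2 ^ (k + 1))) := by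
  have hsum : Summable fun p : ℕ × ℕ ↦ (-1) ^ p.2 * z ^ (2 ^ p.1 * (2 * p.2 + 1)) := by
    refine Summable.of_norm ?_
    have hgeom : Summable fun n : ℕ ↦ ‖z‖ ^ (n + 1) :=
      (summable_nat_add_iff 1).mpr (summable_geometric_of_lt_one (norm_nonneg z) hz)
    refine (Nat.twoPowMulOddEquiv.summable_iff.mpr hgeom).congr fun p ↦ ?_
    simp [Nat.twoPowMulOddEquiv_add_one]
  rw [hsum.tsum_prod]
  refine tsum_congr fun k ↦ ?_
  have hzk : ‖z ^ 2 ^ k‖ < 1 := by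
    rw [norm_pow]
    exact pow_lt_one₀ (norm_nonneg z) hz (by positivity)
  rw [pow_succ, pow_mul, ← tsum_neg_one_pow_mul_pow_two_mul_add_one hzk]
  simp only [pow_mul]

/-- For `|z| < 1`,
`Σ_{n≥1} g(n) zⁿ = Σ_{k≥0} z^(2^k)/(1 + z^(2^(k+1)))`. -/
theorem stmt_6 (g : ℕ → ℤ)
    (hg1 : g 1 = 1)
    (hgmul : ∀ m n : ℕ, 1 ≤ m → 1 ≤ n → g (m * n) = g m * g n)
    (hgp : ∀ p : ℕ, p.Prime → g p = if p % 4 = 3 then -1 else 1)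
    (z : ℂ) (hz : ‖z‖ < 1) :
    (∑' n : ℕ, (g (n + 1) : ℂ) * z ^ (n + 1))
      = ∑' k : ℕ, z ^ (2 ^ k) / (1 + z ^ (2 ^ (k + 1))) := by
  have hg2 : g 2 = 1 := by simpa using hgp 2 Nat.prime_two
  have hgχ₄ : ∀ p : ℕ, p.Prime → Odd p → g p = χ₄ p := by
    intro p hp hodd
    have hp4 : p % 4 = 1 ∨ p % 4 = 3 := by have := Nat.odd_iff.mp hodd; omega
    rw [hgp p hp, χ₄_nat_eq_if_mod_four, Nat.odd_iff.mp hodd]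
    rcases hp4 with h | h <;> simp [h]
  rw [← tsum_prod_neg_one_pow_mul_pow_two_pow_mul_odd hz, ← Nat.twoPowMulOddEquiv.tsum_eq]
  refine tsum_congr fun p ↦ ?_
  rw [Nat.twoPowMulOddEquiv_add_one, apply_two_pow_mul_odd hg1 hg2 hgmul hgχ₄]
  push_cast
  ring
end
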